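/- arXiv:2409.13379 — 4 statements merged into one kernel-verified Lean document; each statement's English description precedes it below -/
import Mathlib

section
/- Let ν be a positive semidefinite operator and P an orthogonal projection with PΠ_ν = P (Π_ν the support projection of ν). If ζ is positive semidefinite with PζP = ζ, then ν⁻¹ζν⁻¹ is invariant under the projection onto the range of ν⁻¹Pν⁻¹, i.e. Π_{ν⁻¹Pν⁻¹}(ν⁻¹ζν⁻¹)Π_{ν⁻¹Pν⁻¹} = ν⁻¹ζν⁻¹. -/
open Matrix
open scoped ComplexOrder

/-- `P` is an orthogonal projection matrix. -/
def IsOrthProj {n : ℕ} (P : Matrix (Fin n) (Fin n) ℂ) : Prop :=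
  P.IsHermitian ∧ P * P = P

/-- `P` is the orthogonal projection onto the range (support) of `ν`. -/
def IsSupportProj {n : ℕ} (ν P : Matrix (Fin n) (Fin n) ℂ) : Prop :=
  IsOrthProj P ∧ LinearMap.range P.mulVecLin = LinearMap.range ν.mulVecLin

/-- `νinv` is the Moore–Penrose pseudoinverse of the PSD matrix `ν`,
where `Pnu` is the support projection of `ν`. -/
def IsPseudoInv {n : ℕ} (ν νinv Pnu : Matrix (Fin n) (Fin n) ℂ) : Prop :=
  νinv.PosSemidef ∧ νinv * ν = Pnu ∧ ν * νinv = Pnu ∧ Pnu * νinv = νinv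

open Matrix
open scoped ComplexOrder

lemma range_mul_le {n : ℕ} (A B : Matrix (Fin n) (Fin n) ℂ) :
    LinearMap.range (A * B).mulVecLin ≤ LinearMap.range A.mulVecLin := by
  rw [Matrix.mulVecLin_mul]
  exact LinearMap.range_comp_le_range _ _

lemma range_self_mul_conjTranspose {n : ℕ} (A : Matrix (Fin n) (Fin n) ℂ) :
    LinearMap.range (A * Aᴴ).mulVecLin = LinearMap.range A.mulVecLin := by
  apply Submodule.eq_of_le_of_finrank_le (range_mul_le A Aᴴ)
  exact le_of_eq (Matrix.rank_self_mul_conjTranspose A).symm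

lemma proj_mul_of_range_le {n : ℕ} (Q X : Matrix (Fin n) (Fin n) ℂ)
    (hQ : Q * Q = Q)
    (h : LinearMap.range X.mulVecLin ≤ LinearMap.range Q.mulVecLin) :
    Q * X = X := by
  have key : ∀ v, (Q * X).mulVec v = X.mulVec v := by
    intro v
    obtain ⟨w, hw⟩ := h ⟨v, rfl⟩
    simp only [Matrix.mulVecLin_apply] at hw
    calc (Q * X) *ᵥ v = Q *ᵥ (X *ᵥ v) := by rw [Matrix.mulVec_mulVec]
    _ = Q *ᵥ (Q *ᵥ w) := by rw [hw]
    _ = (Q * Q) *ᵥ w := by rw [Matrix.mulVec_mulVec]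
    _ = Q *ᵥ w := by rw [hQ]
    _ = X *ᵥ v := hw
  ext i j
  have := congrFun (key (Pi.single j 1)) i
  simpa [Matrix.mulVec_single] using this

theorem stmt_11' {n : ℕ} (ν ζ : Matrix (Fin n) (Fin n) ℂ)
    (hν : ν.PosSemidef) (hζ : ζ.PosSemidef)
    (Pnu : Matrix (Fin n) (Fin n) ℂ) (hPnu : LinearMap.range Pnu.mulVecLin = LinearMap.range ν.mulVecLin)
    (νinv : Matrix (Fin n) (Fin n) ℂ)
    (hνinvH : νinvᴴ = νinv)
    (P : Matrix (Fin n) (Fin n) ℂ) (hPH : Pᴴ = P) (hPP : P * P = P)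
    (hζinv : P * ζ * P = ζ)
    (Q : Matrix (Fin n) (Fin n) ℂ)
    (hQH : Qᴴ = Q) (hQQ : Q * Q = Q)
    (hQr : LinearMap.range Q.mulVecLin = LinearMap.range (νinv * P * νinv).mulVecLin) :
    Q * (νinv * ζ * νinv) * Q = νinv * ζ * νinv := by
  set A := νinv * P with hA
  have hAH : Aᴴ = P * νinv := by rw [hA, Matrix.conjTranspose_mul, hPH, hνinvH]
  have hN : νinv * P * νinv = A * Aᴴ := by
    rw [hAH, hA]
    rw [show νinv * P * (P * νinv) = νinv * (P * P) * νinv by noncomm_ring, hPP]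
  have hrangeQ : LinearMap.range Q.mulVecLin = LinearMap.range A.mulVecLin := by
    rw [hQr, hN, range_self_mul_conjTranspose]
  have hM : νinv * ζ * νinv = A * (ζ * (P * νinv)) := by
    conv_lhs => rw [← hζinv]
    rw [hA]; noncomm_ring
  have hQM : Q * (νinv * ζ * νinv) = νinv * ζ * νinv := by
    apply proj_mul_of_range_le _ _ hQQ
    rw [hrangeQ, hM]
    exact range_mul_le _ _
  have hMH : (νinv * ζ * νinv)ᴴ = νinv * ζ * νinv := by
    simp [Matrix.conjTranspose_mul, hνinvH, hζ.1.eq, Matrix.mul_assoc]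
  have hMQ : (νinv * ζ * νinv) * Q = νinv * ζ * νinv := by
    calc (νinv * ζ * νinv) * Q = ((Qᴴ * (νinv * ζ * νinv)ᴴ))ᴴ := by
          simp [Matrix.conjTranspose_mul]
    _ = (Q * (νinv * ζ * νinv))ᴴ := by rw [hQH, hMH]
    _ = νinv * ζ * νinv := by rw [hQM, hMH]
  rw [hQM, hMQ]


/-- If `PΠ_ν = P` and `PζP = ζ` (PSD `ζ`), then `ν⁻¹ζν⁻¹` is invariant under
the projection onto the range of `ν⁻¹Pν⁻¹`. -/
theorem stmt_11 {n : ℕ} (ν ζ : Matrix (Fin n) (Fin n) ℂ)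
    (hν : ν.PosSemidef) (hζ : ζ.PosSemidef)
    (Pnu : Matrix (Fin n) (Fin n) ℂ) (hPnu : IsSupportProj ν Pnu)
    (νinv : Matrix (Fin n) (Fin n) ℂ) (hνinv : IsPseudoInv ν νinv Pnu)
    (P : Matrix (Fin n) (Fin n) ℂ) (hP : IsOrthProj P) (hPsub : P * Pnu = P)
    (hζinv : P * ζ * P = ζ)
    (Q : Matrix (Fin n) (Fin n) ℂ)
    (hQ : IsSupportProj (νinv * P * νinv) Q) :
    Q * (νinv * ζ * νinv) * Q = νinv * ζ * νinv :=
  stmt_11' ν ζ hν hζ Pnu hPnu.2 νinv hνinv.1.1 P hP.1 hP.2 hζinv Q hQ.1.1 hQ.1.2 hQ.2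
end

section
/- Let ν ≥ 0 with support projection Π_ν, let Π be an orthogonal projection with ΠΠ_ν = Π, and set P := Π_{ν^{-1/2}Πν^{-1/2}} (the projection onto the range of ν^{-1/2}Πν^{-1/2}, using the pseudoinverse square root). Then for any positive semidefinite ζ, the following are equivalent: (1) ν^{1/2}ζν^{1/2} is invariant under Π (i.e. Π ν^{1/2}ζν^{1/2} Π = ν^{1/2}ζν^{1/2}); (2) Π_νζΠ_ν is invariant under P; (3) ζ is invariant under I − Π_ν + P. -/
open Matrix
open scoped ComplexOrder

/-
For PSD `ζ` and an orthogonal projection `Q`, the matrix `Bᴴ ζ B` is invariant under `Q` exactly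
when `ζ B Q = ζ B`: if it is invariant then `(1 - Q) Bᴴ ζ B (1 - Q) = 0`, which forces
`ζ B (1 - Q) = 0`. This turns all three conditions into linear conditions on `ζ`, each
equivalent to `ζ P = ζ Π_ν`. For the first one, `Π` and `P` are linked through
`A = ν^{-1/2} Π ν^{-1/2}`: its range is that of `P`, and `ν^{1/2} A = Π ν^{-1/2}`.
-/

namespace Matrix

variable {l m n k : Type*}

theorem mul_eq_zero_iff_range_le_ker {R : Type*} [CommRing R] [Fintype m] [Fintype n]
    {M : Matrix l m R} {B : Matrix m n R} :
    M * B = 0 ↔ LinearMap.range B.mulVecLin ≤ LinearMap.ker M.mulVecLin := by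
  classical
  rw [LinearMap.range_le_ker_iff, ← mulVecLin_mul, ← toLin'_apply', ← map_zero toLin',
    toLin'.injective.eq_iff]

theorem mul_eq_mul_of_range_le {R : Type*} [CommRing R] [Fintype m] [Fintype n] [Fintype k]
    {X Y : Matrix l m R} {B : Matrix m n R} {C : Matrix m k R}
    (hBC : LinearMap.range B.mulVecLin ≤ LinearMap.range C.mulVecLin) (h : X * C = Y * C) :
    X * B = Y * B := by
  rw [← sub_eq_zero, ← Matrix.sub_mul, mul_eq_zero_iff_range_le_ker] at h ⊢
  exact hBC.trans h

open scoped MatrixOrder in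
theorem PosSemidef.conjTranspose_mul_mul_same_eq_zero_iff {𝕜 : Type*} [RCLike 𝕜] [Fintype n]
    {X : Matrix n n 𝕜} (hX : X.PosSemidef) (B : Matrix n m 𝕜) :
    Bᴴ * X * B = 0 ↔ X * B = 0 := by
  classical
  obtain ⟨C, rfl⟩ := CStarAlgebra.nonneg_iff_eq_star_mul_self.mp hX.nonneg
  rw [star_eq_conjTranspose, conjTranspose_mul_self_mul_eq_zero,
    ← conjTranspose_mul_self_eq_zero (A := C * B), conjTranspose_mul]
  simp only [Matrix.mul_assoc]

theorem PosSemidef.invariant_conjTranspose_mul_mul_same_iff {𝕜 : Type*} [RCLike 𝕜]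
    [Fintype m] [Fintype n] [DecidableEq m] {ζ : Matrix n n 𝕜} (hζ : ζ.PosSemidef)
    (B : Matrix n m 𝕜) {Q : Matrix m m 𝕜} (hQ : Q.IsHermitian) (hQQ : Q * Q = Q) :
    Q * (Bᴴ * ζ * B) * Q = Bᴴ * ζ * B ↔ ζ * B * Q = ζ * B := by
  constructor
  · intro h
    have hQ' : (1 - Q) * Q = 0 := by rw [sub_mul, one_mul, hQQ, sub_self]
    have hcompl : (B * (1 - Q))ᴴ * ζ * (B * (1 - Q)) = 0 :=
      calc _ = (1 - Q) * (Q * (Bᴴ * ζ * B) * Q) * (1 - Q) := by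
            rw [h, conjTranspose_mul, (isHermitian_one.sub hQ).eq]; simp only [Matrix.mul_assoc]
        _ = ((1 - Q) * Q) * (Bᴴ * ζ * B) * (Q * (1 - Q)) := by simp only [Matrix.mul_assoc]
        _ = 0 := by rw [hQ', Matrix.zero_mul, Matrix.zero_mul]
    rw [hζ.conjTranspose_mul_mul_same_eq_zero_iff, ← Matrix.mul_assoc, Matrix.mul_sub,
      Matrix.mul_one, sub_eq_zero] at hcompl
    exact hcompl.symm
  · intro h
    have hright : Bᴴ * ζ * B * Q = Bᴴ * ζ * B := by
      simp only [Matrix.mul_assoc] at h ⊢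
      rw [h]
    have hleft : Q * (Bᴴ * ζ * B) = Bᴴ * ζ * B := by
      simpa [hQ.eq, hζ.1.eq, Matrix.mul_assoc] using congrArg (·ᴴ) hright
    rw [hleft, hright]

end Matrix

section Projections

variable {n : ℕ}

theorem IsOrthProj.one_sub_add {Q R : Matrix (Fin n) (Fin n) ℂ} (hQ : IsOrthProj Q)
    (hR : IsOrthProj R) (hQR : Q * R = R) : IsOrthProj (1 - Q + R) := by
  have hRQ : R * Q = R := by simpa [hQ.1.eq, hR.1.eq] using congrArg (·ᴴ) hQR
  refine ⟨(isHermitian_one.sub hQ.1).add hR.1, ?_⟩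
  simp only [Matrix.mul_add, Matrix.add_mul, Matrix.mul_sub, Matrix.sub_mul, Matrix.mul_one,
    Matrix.one_mul, hQ.2, hR.2, hQR, hRQ]
  abel

theorem IsSupportProj.mul_eq_mul_of_mul_eq {M Q X Y : Matrix (Fin n) (Fin n) ℂ}
    (hQ : IsSupportProj M Q) (h : X * M = Y * M) : X * Q = Y * Q :=
  mul_eq_mul_of_range_le hQ.2.le h

theorem IsSupportProj.proj_mul_eq {M Q : Matrix (Fin n) (Fin n) ℂ} (hQ : IsSupportProj M Q) :
    Q * M = M := by
  simpa using mul_eq_mul_of_range_le (X := Q) (Y := 1) hQ.2.ge (by rw [hQ.1.2, Matrix.one_mul])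

theorem IsSupportProj.mul_sqrt_eq {ν Q s : Matrix (Fin n) (Fin n) ℂ} (hQ : IsSupportProj ν Q)
    (hs : s.IsHermitian) (hs2 : s * s = ν) : Q * s = s := by
  have h : (Q - 1) * (s * sᴴ) = 0 := by
    rw [hs.eq, hs2, sub_mul, one_mul, hQ.proj_mul_eq, sub_self]
  rwa [mul_self_mul_conjTranspose_eq_zero, sub_mul, one_mul, sub_eq_zero] at h

theorem mul_sqrt_mul_proj_eq_iff {Pnu s sinv Pi P : Matrix (Fin n) (Fin n) ℂ}
    (X : Matrix (Fin n) (Fin n) ℂ) (hs : s.IsHermitian) (hPnus : Pnu * s = s)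
    (hsinv : IsPseudoInv s sinv Pnu) (hPi : IsOrthProj Pi) (hPnuPi : Pnu * Pi = Pi)
    (hP : IsSupportProj (sinv * Pi * sinv) P) (hPnuP : Pnu * P = P) :
    X * s * Pi = X * s ↔ X * P = X * Pnu := by
  have hsA : s * (sinv * Pi * sinv) = Pi * sinv := by
    rw [← Matrix.mul_assoc, ← Matrix.mul_assoc, hsinv.2.2.1, hPnuPi]
  constructor
  · intro h
    have hX : X * Pnu = X * s * s * (sinv * Pi * sinv) :=
      calc X * Pnu = X * s * sinv := by rw [Matrix.mul_assoc, hsinv.2.2.1]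
        _ = X * s * Pi * sinv := by rw [h]
        _ = X * s * s * (sinv * Pi * sinv) := by
          rw [Matrix.mul_assoc (X * s) Pi, ← hsA, ← Matrix.mul_assoc]
    have hAP : sinv * Pi * sinv * P = sinv * Pi * sinv := by
      simpa [hP.1.1.eq, hsinv.1.1.eq, hPi.1.eq, Matrix.mul_assoc]
        using congrArg (·ᴴ) hP.proj_mul_eq
    rw [← hPnuP, ← Matrix.mul_assoc, hX, Matrix.mul_assoc _ _ P, hAP]
  · intro h
    have hPisP : Pi * s * P = s * P :=
      hP.mul_eq_mul_of_mul_eq (by rw [Matrix.mul_assoc, hsA, ← Matrix.mul_assoc, hPi.2])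
    have hPsPi : P * s * Pi = P * s := by
      simpa [hP.1.1.eq, hs.eq, hPi.1.eq, Matrix.mul_assoc] using congrArg (·ᴴ) hPisP
    have hXs : X * s = X * P * s := by rw [h, Matrix.mul_assoc, hPnus]
    rw [hXs]
    simp only [Matrix.mul_assoc]
    rw [← Matrix.mul_assoc P, hPsPi]

end Projections

theorem stmt_12_general {n : ℕ} (ν ζ : Matrix (Fin n) (Fin n) ℂ)
    (hζ : ζ.PosSemidef)
    (Pnu : Matrix (Fin n) (Fin n) ℂ) (hPnu : IsSupportProj ν Pnu)
    (s : Matrix (Fin n) (Fin n) ℂ) (hs : s.PosSemidef) (hs2 : s * s = ν)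
    (sinv : Matrix (Fin n) (Fin n) ℂ) (hsinv : IsPseudoInv s sinv Pnu)
    (Pi : Matrix (Fin n) (Fin n) ℂ) (hPi : IsOrthProj Pi)
    (hPisub : Pi * Pnu = Pi)
    (P : Matrix (Fin n) (Fin n) ℂ)
    (hP : IsSupportProj (sinv * Pi * sinv) P) :
    (Pi * (s * ζ * s) * Pi = s * ζ * s ↔
        P * (Pnu * ζ * Pnu) * P = Pnu * ζ * Pnu) ∧
      (P * (Pnu * ζ * Pnu) * P = Pnu * ζ * Pnu ↔
        (1 - Pnu + P) * ζ * (1 - Pnu + P) = ζ) := by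
  have hPnuPi : Pnu * Pi = Pi := by
    simpa [hPnu.1.1.eq, hPi.1.eq] using congrArg (·ᴴ) hPisub
  have hPnuP : Pnu * P = P :=
    (hP.mul_eq_mul_of_mul_eq (X := Pnu) (Y := 1) <| by
      rw [one_mul, ← Matrix.mul_assoc, ← Matrix.mul_assoc, hsinv.2.2.2]).trans (one_mul P)
  have h1 : Pi * (s * ζ * s) * Pi = s * ζ * s ↔ ζ * P = ζ * Pnu := by
    have hcompress := hζ.invariant_conjTranspose_mul_mul_same_iff s hPi.1 hPi.2
    rw [hs.1.eq] at hcompress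
    rw [hcompress]
    exact mul_sqrt_mul_proj_eq_iff ζ hs.1 (hPnu.mul_sqrt_eq hs.1 hs2) hsinv hPi hPnuPi hP hPnuP
  have h2 : P * (Pnu * ζ * Pnu) * P = Pnu * ζ * Pnu ↔ ζ * P = ζ * Pnu := by
    have hcompress := hζ.invariant_conjTranspose_mul_mul_same_iff Pnu hP.1.1 hP.1.2
    rw [hPnu.1.1.eq] at hcompress
    rw [hcompress, Matrix.mul_assoc, hPnuP]
  have h3 : (1 - Pnu + P) * ζ * (1 - Pnu + P) = ζ ↔ ζ * P = ζ * Pnu := by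
    have hQ := hPnu.1.one_sub_add hP.1 hPnuP
    have hcompress := hζ.invariant_conjTranspose_mul_mul_same_iff 1 hQ.1 hQ.2
    simp only [conjTranspose_one, Matrix.mul_one, Matrix.one_mul] at hcompress
    rw [hcompress, mul_add, mul_sub, mul_one, sub_add_eq_add_sub, sub_eq_iff_eq_add, add_right_inj,
      eq_comm]
  exact ⟨h1.trans h2.symm, h2.trans h3.symm⟩

/-- Let `s = ν^{1/2}` (PSD square root of `ν`), `sinv = ν^{-1/2}` its
pseudoinverse, `Π` an orthogonal projection with `ΠΠ_ν = Π`, and `P` the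
projection onto the range of `ν^{-1/2}Πν^{-1/2}`.  Then for PSD `ζ`, the
following are equivalent:
`Π(ν^{1/2}ζν^{1/2})Π = ν^{1/2}ζν^{1/2}`;  `P(Π_νζΠ_ν)P = Π_νζΠ_ν`;
`(I − Π_ν + P)ζ(I − Π_ν + P) = ζ`. -/
theorem stmt_12 {n : ℕ} (ν ζ : Matrix (Fin n) (Fin n) ℂ)
    (hν : ν.PosSemidef) (hζ : ζ.PosSemidef)
    (Pnu : Matrix (Fin n) (Fin n) ℂ) (hPnu : IsSupportProj ν Pnu)
    (s : Matrix (Fin n) (Fin n) ℂ) (hs : s.PosSemidef) (hs2 : s * s = ν)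
    (sinv : Matrix (Fin n) (Fin n) ℂ) (hsinv : IsPseudoInv s sinv Pnu)
    (Pi : Matrix (Fin n) (Fin n) ℂ) (hPi : IsOrthProj Pi)
    (hPisub : Pi * Pnu = Pi)
    (P : Matrix (Fin n) (Fin n) ℂ)
    (hP : IsSupportProj (sinv * Pi * sinv) P) :
    (Pi * (s * ζ * s) * Pi = s * ζ * s ↔
        P * (Pnu * ζ * Pnu) * P = Pnu * ζ * Pnu) ∧
      (P * (Pnu * ζ * Pnu) * P = Pnu * ζ * Pnu ↔
        (1 - Pnu + P) * ζ * (1 - Pnu + P) = ζ) :=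
  stmt_12_general ν ζ hζ Pnu hPnu s hs hs2 sinv hsinv Pi hPi hPisub P hP
end

section
/- Let σ be a PSD operator on a finite-dimensional Hilbert space with support projection Π_σ, and let P be an orthogonal projection with PΠ_σ = P. Then the minimum of ‖ψ / Tr(ψσ)‖_∞ over all density operators ψ invariant under the projection I − Π_σ + P equals 1 / Tr(Pσ), and the minimum is achieved at ψ = P / Tr(P). -/
open Matrix
open scoped ComplexOrder

/-!
Put `Q = 1 - Π_σ + P`. Since `Π_σ σ = σ Π_σ = σ`, we get `Q σ Q = P σ P`, so every `Q`-invariant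
`ψ` satisfies `Tr(ψ σ) = Tr(ψ (P σ P))`. If `λ` is the largest eigenvalue of `ψ`, then `λ • 1 - ψ`
and `P σ P` are positive semidefinite, so the trace of their product is nonnegative, i.e.
`Tr(ψ σ) ≤ λ Tr(P σ P) = λ Tr(P σ)`. Hence `λ / Tr(ψ σ) ≥ 1 / Tr(P σ)`. The state `P / Tr P` has
largest eigenvalue `1 / Tr P` and `Tr((P / Tr P) σ) = Tr(P σ) / Tr P`, so it attains the bound.
-/

section Ring

variable {R : Type*} [Ring R] {E P A : R}

theorem one_sub_add_mul_of_mul_eq (h : E * A = A) : (1 - E + P) * A = P * A := by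
  rw [add_mul, sub_mul, one_mul, h, sub_self, zero_add]

theorem mul_one_sub_add_of_mul_eq (h : A * E = A) : A * (1 - E + P) = A * P := by
  rw [mul_add, mul_sub, mul_one, h, sub_self, zero_add]

end Ring

namespace Matrix

variable {m : Type*} [Fintype m]

theorem mul_eq_right_of_range_le {R : Type*} [CommRing R] [DecidableEq m] {E A : Matrix m m R}
    (hE : IsIdempotentElem E) (h : LinearMap.range A.mulVecLin ≤ LinearMap.range E.mulVecLin) :
    E * A = A := by
  refine ext_of_mulVec_single fun i => ?_
  obtain ⟨w, hw⟩ := h ⟨Pi.single i 1, rfl⟩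
  simp only [mulVecLin_apply] at hw
  rw [← mulVec_mulVec, ← hw, mulVec_mulVec, hE.eq]

theorem IsHermitian.mul_eq_right_iff {α : Type*} [CommSemiring α] [StarRing α]
    {A B : Matrix m m α} (hA : A.IsHermitian) (hB : B.IsHermitian) : A * B = B ↔ B * A = B := by
  constructor <;> intro h <;>
    simpa only [conjTranspose_mul, hA.eq, hB.eq] using congrArg (fun M => Mᴴ) h

theorem trace_mul_eq_of_conj_eq {α : Type*} [CommSemiring α] {Q ψ σ : Matrix m m α}
    (hψ : Q * ψ * Q = ψ) : (ψ * σ).trace = (ψ * (Q * σ * Q)).trace := by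
  conv_lhs => rw [← hψ]
  rw [mul_assoc (Q * ψ), trace_mul_comm, ← mul_assoc, trace_mul_comm]

theorem hasEigenvalue_mulVecLin_iff_mem_spectrum {K : Type*} [Field K] [DecidableEq m]
    {A : Matrix m m K} {μ : K} :
    Module.End.HasEigenvalue A.mulVecLin μ ↔ μ ∈ spectrum K A := by
  rw [← toLin'_apply', Module.End.hasEigenvalue_iff_mem_spectrum, spectrum_toLin']

theorem eq_zero_or_eq_of_hasEigenvalue_smul {K : Type*} [Field K] {P : Matrix m m K}
    (hP : IsIdempotentElem P) {c μ : K} (h : Module.End.HasEigenvalue (c • P).mulVecLin μ) :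
    μ = 0 ∨ μ = c := by
  obtain ⟨v, hv, hv0⟩ := h.exists_hasEigenvector
  rw [Module.End.mem_eigenspace_iff, mulVecLin_apply, smul_mulVec] at hv
  have hPv : μ • P *ᵥ v = μ • v := by
    rw [← mulVec_smul, ← hv, mulVec_smul, mulVec_mulVec, hP.eq, hv]
  by_cases hμ : μ = 0
  · exact .inl hμ
  rw [smul_right_injective _ hμ hPv] at hv
  exact .inr (smul_left_injective K hv0 hv).symm

theorem hasEigenvalue_smul_of_isIdempotentElem {K : Type*} [Field K] {P : Matrix m m K}
    (hP : IsIdempotentElem P) (hP0 : P ≠ 0) (c : K) :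
    Module.End.HasEigenvalue (c • P).mulVecLin c := by
  obtain ⟨v, hv⟩ : ∃ v, P *ᵥ v ≠ 0 := by
    classical
    by_contra! h
    exact hP0 (ext_of_mulVec_single fun i => by rw [h, zero_mulVec])
  refine Module.End.hasEigenvalue_of_hasEigenvector ⟨?_, hv⟩
  rw [Module.End.mem_eigenspace_iff, mulVecLin_apply, smul_mulVec, mulVec_mulVec, hP.eq]

theorem isGreatest_hasEigenvalue_smul {P : Matrix m m ℂ} (hP : IsIdempotentElem P) (hP0 : P ≠ 0)
    {c : ℝ} (hc : 0 ≤ c) :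
    IsGreatest {r : ℝ | Module.End.HasEigenvalue ((c : ℂ) • P).mulVecLin r} c := by
  refine ⟨hasEigenvalue_smul_of_isIdempotentElem hP hP0 _, fun r hr => ?_⟩
  rcases eq_zero_or_eq_of_hasEigenvalue_smul hP hr with h | h <;> norm_cast at h <;> linarith

open scoped MatrixOrder in
theorem PosSemidef.trace_mul_nonneg {𝕜 : Type*} [RCLike 𝕜] [DecidableEq m] {A B : Matrix m m 𝕜}
    (hA : A.PosSemidef) (hB : B.PosSemidef) : 0 ≤ (A * B).trace := by
  obtain ⟨C, rfl⟩ := CStarAlgebra.nonneg_iff_eq_star_mul_self.mp hB.nonneg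
  rw [← mul_assoc, trace_mul_cycle, star_eq_conjTranspose]
  simpa using (hA.mul_mul_conjTranspose_same C).trace_nonneg

open scoped MatrixOrder in
theorem IsHermitian.posSemidef_smul_one_sub [DecidableEq m] {A : Matrix m m ℂ}
    (hA : A.IsHermitian) {r : ℝ} (h : ∀ x : ℝ, Module.End.HasEigenvalue A.mulVecLin x → x ≤ r) :
    ((r : ℂ) • 1 - A).PosSemidef := by
  have hle : A ≤ algebraMap ℝ _ r := by
    rw [le_algebraMap_iff_spectrum_le hA.isSelfAdjoint]
    exact fun x hx => h x <|
      hasEigenvalue_mulVecLin_iff_mem_spectrum.mpr ((spectrum.algebraMap_mem_iff ℂ).mpr hx)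
  rw [le_iff, Algebra.algebraMap_eq_smul_one] at hle
  simpa using hle

theorem IsHermitian.re_trace_mul_le [DecidableEq m] {A X : Matrix m m ℂ} (hA : A.IsHermitian)
    {r : ℝ} (hr : r ∈ upperBounds {x : ℝ | Module.End.HasEigenvalue A.mulVecLin x})
    (hX : X.PosSemidef) : (A * X).trace.re ≤ r * X.trace.re := by
  have h := ((hA.posSemidef_smul_one_sub fun _ hx => hr hx).trace_mul_nonneg hX).1
  simpa [sub_mul, trace_sub, trace_smul] using h

end Matrix

theorem IsOrthProj.posSemidef {n : ℕ} {P : Matrix (Fin n) (Fin n) ℂ} (hP : IsOrthProj P) :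
    P.PosSemidef := by
  simpa only [hP.1.eq, hP.2] using posSemidef_conjTranspose_mul_self P

theorem IsOrthProj.exists_trace_eq_ofReal {n : ℕ} {P : Matrix (Fin n) (Fin n) ℂ}
    (hP : IsOrthProj P) (hP0 : P ≠ 0) : ∃ t : ℝ, 0 < t ∧ P.trace = t := by
  have htr : 0 < P.trace := hP.posSemidef.trace_nonneg.lt_of_ne
    fun h => hP0 (hP.posSemidef.trace_eq_zero_iff.mp h.symm)
  obtain ⟨t, ht, hPt⟩ := RCLike.pos_iff_exists_ofReal.mp htr
  exact ⟨t, ht, hPt.symm⟩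

theorem IsOrthProj.conj_one_sub_add_self {n : ℕ} {S P : Matrix (Fin n) (Fin n) ℂ}
    (hS : IsOrthProj S) (hP : IsOrthProj P) (h : P * S = P) :
    (1 - S + P) * P * (1 - S + P) = P := by
  have h' : S * P = P := (hS.1.mul_eq_right_iff hP.1).mpr h
  rw [one_sub_add_mul_of_mul_eq h', hP.2, mul_one_sub_add_of_mul_eq h, hP.2]

theorem IsSupportProj.mul_eq_right {n : ℕ} {ν S : Matrix (Fin n) (Fin n) ℂ}
    (hS : IsSupportProj ν S) : S * ν = ν :=
  mul_eq_right_of_range_le hS.1.2 hS.2.ge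

theorem IsSupportProj.conj_one_sub_add {n : ℕ} {ν S : Matrix (Fin n) (Fin n) ℂ}
    (hS : IsSupportProj ν S) (hν : ν.IsHermitian) (P : Matrix (Fin n) (Fin n) ℂ) :
    (1 - S + P) * ν * (1 - S + P) = P * ν * P := by
  have h := hS.mul_eq_right
  rw [one_sub_add_mul_of_mul_eq h, mul_assoc,
    mul_one_sub_add_of_mul_eq ((hS.1.1.mul_eq_right_iff hν).mp h), mul_assoc]

/-- The minimum of `‖ψ / Tr(ψσ)‖_∞` (operator norm = largest eigenvalue) over
density operators `ψ` invariant under `I − Π_σ + P` equals `1 / Tr(Pσ)`, and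
is achieved at `ψ = P / Tr(P)`. -/
theorem stmt_13 {n : ℕ} (σ : Matrix (Fin n) (Fin n) ℂ) (hσ : σ.PosSemidef)
    (Psig : Matrix (Fin n) (Fin n) ℂ) (hPsig : IsSupportProj σ Psig)
    (P : Matrix (Fin n) (Fin n) ℂ) (hP : IsOrthProj P) (hPsub : P * Psig = P)
    (hpos : 0 < ((P * σ).trace).re) :
    IsLeast
      {c : ℝ | ∃ (ψ : Matrix (Fin n) (Fin n) ℂ) (m : ℝ),
        ψ.PosSemidef ∧ ψ.trace = 1 ∧
        (1 - Psig + P) * ψ * (1 - Psig + P) = ψ ∧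
        0 < ((ψ * σ).trace).re ∧
        IsGreatest {r : ℝ | Module.End.HasEigenvalue ψ.mulVecLin (r : ℂ)} m ∧
        c = m / ((ψ * σ).trace).re}
      (1 / ((P * σ).trace).re) ∧
    (∃ m : ℝ,
      IsGreatest {r : ℝ |
        Module.End.HasEigenvalue ((P.trace)⁻¹ • P).mulVecLin (r : ℂ)} m ∧
      m / ((((P.trace)⁻¹ • P) * σ).trace).re = 1 / ((P * σ).trace).re) := by
  have hP0 : P ≠ 0 := by rintro rfl; simp at hpos
  obtain ⟨t, ht, hPt⟩ := hP.exists_trace_eq_ofReal hP0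
  have hψ₀σ : ((((t⁻¹ : ℝ) : ℂ) • P * σ).trace).re = t⁻¹ * ((P * σ).trace).re := by
    rw [smul_mul, trace_smul, smul_eq_mul, Complex.re_ofReal_mul]
  have hmax := isGreatest_hasEigenvalue_smul hP.2 hP0 (inv_nonneg.mpr ht.le)
  have hratio : t⁻¹ / ((((t⁻¹ : ℝ) : ℂ) • P * σ).trace).re = 1 / ((P * σ).trace).re := by
    rw [hψ₀σ]; field_simp
  rw [hPt, ← Complex.ofReal_inv]
  refine ⟨⟨⟨_, t⁻¹, hP.posSemidef.smul (Complex.zero_le_real.mpr (inv_nonneg.mpr ht.le)), ?_,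
    ?_, by rw [hψ₀σ]; positivity, hmax, hratio.symm⟩, ?_⟩, ⟨t⁻¹, hmax, hratio⟩⟩
  · rw [trace_smul, hPt, smul_eq_mul, ← Complex.ofReal_mul, inv_mul_cancel₀ ht.ne',
      Complex.ofReal_one]
  · rw [Matrix.mul_smul, Matrix.smul_mul, hPsig.1.conj_one_sub_add_self hP hPsub]
  rintro _ ⟨ψ, m, hψ, -, hψQ, hψσ, hm, rfl⟩
  have hbound : ((ψ * σ).trace).re ≤ m * ((P * σ).trace).re := by
    have htrPσP : (P * σ * P).trace = (P * σ).trace := by rw [trace_mul_cycle, hP.2]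
    rw [trace_mul_eq_of_conj_eq hψQ, hPsig.conj_one_sub_add hσ.isHermitian, ← htrPσP]
    exact hψ.isHermitian.re_trace_mul_le hm.2 <| by
      simpa only [hP.1.eq] using hσ.mul_mul_conjTranspose_same P
  rw [div_le_div_iff₀ hpos hψσ]
  linarith
end

section
/- Let ρ and σ be density operators on a finite-dimensional Hilbert space with equal supports (Π_ρ = Π_σ). Define T^max as the projection onto the eigenspace of σ^{-1/2}ρσ^{-1/2} (pseudoinverse square roots) corresponding to its largest eigenvalue R_max(ρ,σ). If ψ is a density operator invariant under the projection I − Π_σ + P^max, where P^max := Π_{σ^{-1/2}T^{max}σ^{-1/2}}, then Tr(ψρ) = R_max(ρ,σ) · Tr(ψσ). -/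
open Matrix
open scoped ComplexOrder

/-- `P` is the orthogonal projection onto the eigenspace of `ν` for the (real)
eigenvalue `μ`. -/
def IsEigenProj {n : ℕ} (ν : Matrix (Fin n) (Fin n) ℂ) (μ : ℝ)
    (P : Matrix (Fin n) (Fin n) ℂ) : Prop :=
  IsOrthProj P ∧
    LinearMap.range P.mulVecLin = Module.End.eigenspace ν.mulVecLin (μ : ℂ)

/-!
On the support of `σ` write `ρ = s A s` with `A = σ^{-1/2} ρ σ^{-1/2}` and `s = σ^{1/2}`. For
`M = σ^{-1/2} T σ^{-1/2}` with `A T = R T` one gets `ρ M = s A T σ^{-1/2} = R σ M`, and this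
identity passes from `M` to every matrix whose range lies in that of `M`, in particular to `P^max`.
Since `ρ` and `σ` vanish off the support of `σ`, with `Q = I − Π_σ + P^max` this gives
`ρ Q = R σ Q`, and `ψ = Q ψ Q` together with cyclicity of the trace yields
`Tr(ψ ρ) = Tr(ψ Q ρ Q) = R Tr(ψ Q σ Q) = R Tr(ψ σ)`.
-/

namespace Matrix

variable {m K : Type*} [Fintype m] [CommRing K]

lemma mul_eq_mul_of_range_le_s15 {X Y M N : Matrix m m K}
    (hNM : LinearMap.range N.mulVecLin ≤ LinearMap.range M.mulVecLin) (h : X * M = Y * M) :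
    X * N = Y * N := by
  refine ext_iff_mulVec.2 fun v => ?_
  obtain ⟨w, hw : M *ᵥ w = N *ᵥ v⟩ := hNM (LinearMap.mem_range_self N.mulVecLin v)
  rw [← mulVec_mulVec, ← mulVec_mulVec, ← hw, mulVec_mulVec, mulVec_mulVec, h]

lemma mul_eq_self_of_range_le [DecidableEq m] {P N : Matrix m m K} (hP : P * P = P)
    (hNP : LinearMap.range N.mulVecLin ≤ LinearMap.range P.mulVecLin) : P * N = N := by
  simpa using mul_eq_mul_of_range_le_s15 (Y := 1) hNP (by rw [hP, one_mul])

lemma mul_eq_smul_of_range_le_eigenspace {A P : Matrix m m K} {μ : K}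
    (hP : LinearMap.range P.mulVecLin ≤ Module.End.eigenspace A.mulVecLin μ) :
    A * P = μ • P := by
  refine ext_iff_mulVec.2 fun v => ?_
  have hv := Module.End.mem_eigenspace_iff.1 (hP (LinearMap.mem_range_self P.mulVecLin v))
  rwa [← mulVec_mulVec, smul_mulVec]

lemma mul_eq_smul_mul_of_eigen {s sinv P ρ T : Matrix m m K} {c : K}
    (hs : s * sinv = P) (hPsinv : P * sinv = sinv) (hPρ : P * ρ = ρ)
    (hT : sinv * ρ * sinv * T = c • T) :
    ρ * (sinv * T * sinv) = c • (s * s * (sinv * T * sinv)) := by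
  have hPA : P * (sinv * ρ * sinv) = sinv * ρ * sinv := by
    rw [← Matrix.mul_assoc, ← Matrix.mul_assoc, hPsinv]
  calc ρ * (sinv * T * sinv) = s * (sinv * ρ * sinv * T) * sinv := by
        conv_lhs => rw [← hPρ, ← hs]
        simp only [Matrix.mul_assoc]
    _ = s * (P * (sinv * ρ * sinv * T)) * sinv := by rw [← Matrix.mul_assoc P, hPA]
    _ = c • (s * s * (sinv * T * sinv)) := by
        rw [hT, Matrix.mul_smul, Matrix.mul_smul, Matrix.smul_mul, ← hs]
        simp only [Matrix.mul_assoc]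

lemma IsHermitian.mul_eq_self_of_mul_eq_self [StarRing K] {A P : Matrix m m K}
    (hA : A.IsHermitian) (hP : P.IsHermitian) (h : P * A = A) : A * P = A := by
  simpa [conjTranspose_mul, hA.eq, hP.eq] using congrArg (·ᴴ) h

lemma trace_mul_eq_smul_of_sandwich {ψ ρ σ Q : Matrix m m K} {c : K}
    (hψ : Q * ψ * Q = ψ) (hQ : ρ * Q = c • (σ * Q)) :
    (ψ * ρ).trace = c * (ψ * σ).trace := by
  have hcyc : ∀ X : Matrix m m K, (ψ * X).trace = (ψ * Q * (X * Q)).trace := fun X => by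
    conv_lhs => rw [← hψ]
    rw [show Q * ψ * Q * X = Q * (ψ * Q * X) by simp only [Matrix.mul_assoc], trace_mul_comm]
    simp only [Matrix.mul_assoc]
  rw [hcyc, hcyc σ, hQ, Matrix.mul_smul, trace_smul, smul_eq_mul]

end Matrix

lemma IsSupportProj.mul_eq_self {n : ℕ} {ν P : Matrix (Fin n) (Fin n) ℂ}
    (h : IsSupportProj ν P) : P * ν = ν :=
  Matrix.mul_eq_self_of_range_le h.1.2 h.2.ge

lemma IsSupportProj.mul_eq_self_right {n : ℕ} {ν P : Matrix (Fin n) (Fin n) ℂ}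
    (h : IsSupportProj ν P) (hν : ν.IsHermitian) : ν * P = ν :=
  hν.mul_eq_self_of_mul_eq_self h.1.1 h.mul_eq_self

theorem stmt_15_general {n : ℕ} (ρ σ : Matrix (Fin n) (Fin n) ℂ)
    (hρ : ρ.PosSemidef) (hσ : σ.PosSemidef)
    (Psig : Matrix (Fin n) (Fin n) ℂ)
    (hPsigσ : IsSupportProj σ Psig) (hPsigρ : IsSupportProj ρ Psig)
    (s : Matrix (Fin n) (Fin n) ℂ) (hs2 : s * s = σ)
    (sinv : Matrix (Fin n) (Fin n) ℂ) (hsinv : IsPseudoInv s sinv Psig)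
    (Rmax : ℝ)
    (Tmax : Matrix (Fin n) (Fin n) ℂ)
    (hTmax : IsEigenProj (sinv * ρ * sinv) Rmax Tmax)
    (Pmax : Matrix (Fin n) (Fin n) ℂ)
    (hPmax : IsSupportProj (sinv * Tmax * sinv) Pmax)
    (ψ : Matrix (Fin n) (Fin n) ℂ)
    (hψinv : (1 - Psig + Pmax) * ψ * (1 - Psig + Pmax) = ψ) :
    (ψ * ρ).trace = (Rmax : ℂ) * (ψ * σ).trace := by
  have hρPsig : ρ * Psig = ρ := hPsigρ.mul_eq_self_right hρ.isHermitian
  have hσPsig : σ * Psig = σ := hPsigσ.mul_eq_self_right hσ.isHermitian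
  have hρM : ρ * (sinv * Tmax * sinv) = (Rmax : ℂ) • (σ * (sinv * Tmax * sinv)) := by
    rw [← hs2]
    exact Matrix.mul_eq_smul_mul_of_eigen hsinv.2.2.1 hsinv.2.2.2 hPsigρ.mul_eq_self
      (Matrix.mul_eq_smul_of_range_le_eigenspace hTmax.2.le)
  have hρPmax : ρ * Pmax = (Rmax : ℂ) • (σ * Pmax) := by
    rw [← Matrix.smul_mul] at hρM ⊢
    exact Matrix.mul_eq_mul_of_range_le_s15 hPmax.2.le hρM
  refine Matrix.trace_mul_eq_smul_of_sandwich hψinv ?_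
  rw [Matrix.mul_add, Matrix.mul_sub, Matrix.mul_one, hρPsig, hρPmax, Matrix.mul_add,
    Matrix.mul_sub, Matrix.mul_one, hσPsig, sub_self, sub_self, zero_add, zero_add]

/-- For density operators `ρ, σ` with equal supports, if `ψ` is a density
operator invariant under `I − Π_σ + P^max` (with `P^max` the projection onto
the range of `σ^{-1/2} T^max σ^{-1/2}`, `T^max` the top eigenspace projection
of `σ^{-1/2} ρ σ^{-1/2}` with top eigenvalue `R_max(ρ,σ)`), then
`Tr(ψρ) = R_max(ρ,σ) · Tr(ψσ)`. -/
theorem stmt_15 {n : ℕ} (ρ σ : Matrix (Fin n) (Fin n) ℂ)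
    (hρ : ρ.PosSemidef) (hσ : σ.PosSemidef)
    (hρ1 : ρ.trace = 1) (hσ1 : σ.trace = 1)
    (Psig : Matrix (Fin n) (Fin n) ℂ)
    (hPsigσ : IsSupportProj σ Psig) (hPsigρ : IsSupportProj ρ Psig)
    (s : Matrix (Fin n) (Fin n) ℂ) (hs : s.PosSemidef) (hs2 : s * s = σ)
    (sinv : Matrix (Fin n) (Fin n) ℂ) (hsinv : IsPseudoInv s sinv Psig)
    (Rmax : ℝ)
    (hRmax : IsGreatest {r : ℝ |
      Module.End.HasEigenvalue (sinv * ρ * sinv).mulVecLin (r : ℂ)} Rmax)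
    (Tmax : Matrix (Fin n) (Fin n) ℂ)
    (hTmax : IsEigenProj (sinv * ρ * sinv) Rmax Tmax)
    (Pmax : Matrix (Fin n) (Fin n) ℂ)
    (hPmax : IsSupportProj (sinv * Tmax * sinv) Pmax)
    (ψ : Matrix (Fin n) (Fin n) ℂ) (hψ : ψ.PosSemidef) (hψ1 : ψ.trace = 1)
    (hψinv : (1 - Psig + Pmax) * ψ * (1 - Psig + Pmax) = ψ) :
    (ψ * ρ).trace = (Rmax : ℂ) * (ψ * σ).trace :=
  stmt_15_general ρ σ hρ hσ Psig hPsigσ hPsigρ s hs2 sinv hsinv Rmax Tmax hTmax Pmax hPmax ψ hψinv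
end
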